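/- arXiv:2106.03235 — 4 statements merged into one kernel-verified Lean document; each statement's English description precedes it below -/
import Mathlib

section
/- Let Φ be a real n×m matrix with full column rank, y ∈ ℝ^n, and let x̂ ∈ ℝ^m be the (unique) minimizer of z ↦ ‖y − Φz‖₂ over ℝ^m. For each index i, set γ_i = ((ΦᵀΦ)⁻¹)_{ii}. Then the increase in squared residual caused by forcing coordinate i to zero satisfies: (min over z ∈ ℝ^m with z_i = 0 of ‖y − Φz‖₂²) − ‖y − Φx̂‖₂² = x̂_i² / γ_i. -/
/-!
Minimality of `xhat` gives the normal equations `Φᵀ (y - Φ xhat) = 0`, hence the Pythagorean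
identity `‖y - Φ z‖² = ‖y - Φ xhat‖² + (z - xhat)ᵀ A (z - xhat)` with `A = ΦᵀΦ`, and it remains
to minimise `wᵀ A w` subject to `w i = -xhat i`. For `b = A⁻¹ eᵢ` one has `bᵀ A w = w i` and
`bᵀ A b = γ = (A⁻¹)ᵢᵢ`, so `0 ≤ (w - t b)ᵀ A (w - t b) = wᵀ A w - 2 t w i + t² γ`.
Taking `t = w i / γ` gives `wᵀ A w ≥ (w i)² / γ`, with equality at `w = (w i / γ) b`.
-/

open Matrix

/-- The Euclidean (ℓ₂) norm of a finitely indexed real vector. -/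
noncomputable def euclidNorm {ι : Type*} [Fintype ι] (v : ι → ℝ) : ℝ :=
  ‖(WithLp.equiv 2 (ι → ℝ)).symm v‖

section

variable {ι κ : Type*} [Fintype ι] [Fintype κ]

lemma euclidNorm_sq (v : ι → ℝ) : euclidNorm v ^ 2 = v ⬝ᵥ v := by
  rw [euclidNorm, EuclideanSpace.norm_eq, Real.sq_sqrt (by positivity)]
  simp [dotProduct, sq]

lemma dotProduct_eq_zero_of_forall_le_dotProduct_sub_smul {u r : ι → ℝ}
    (h : ∀ t : ℝ, r ⬝ᵥ r ≤ (r - t • u) ⬝ᵥ (r - t • u)) : u ⬝ᵥ r = 0 := by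
  have hquad : ∀ t : ℝ, 0 ≤ (u ⬝ᵥ u) * (t * t) + (-2 * (u ⬝ᵥ r)) * t + 0 := by
    intro t
    have ht := h t
    simp only [sub_dotProduct, dotProduct_sub, smul_dotProduct, dotProduct_smul, smul_eq_mul,
      dotProduct_comm r u] at ht
    linarith
  have hdisc := discrim_le_zero hquad
  rw [discrim] at hdisc
  nlinarith [sq_nonneg (u ⬝ᵥ r)]

lemma mulVec_dotProduct_sub_mulVec_eq_zero_of_forall_euclidNorm_le {Φ : Matrix ι κ ℝ} {y : ι → ℝ}
    {xhat : κ → ℝ} (hxhat : ∀ z, euclidNorm (y - Φ *ᵥ xhat) ≤ euclidNorm (y - Φ *ᵥ z))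
    (v : κ → ℝ) : Φ *ᵥ v ⬝ᵥ (y - Φ *ᵥ xhat) = 0 := by
  refine dotProduct_eq_zero_of_forall_le_dotProduct_sub_smul fun t => ?_
  have hsq : euclidNorm _ ^ 2 ≤ euclidNorm _ ^ 2 :=
    pow_le_pow_left₀ (norm_nonneg _) (hxhat (xhat + t • v)) 2
  rwa [euclidNorm_sq, euclidNorm_sq, mulVec_add, mulVec_smul, sub_add_eq_sub_sub] at hsq

lemma dotProduct_transpose_mul_self_mulVec (Φ : Matrix ι κ ℝ) (v w : κ → ℝ) :
    v ⬝ᵥ (Φᵀ * Φ) *ᵥ w = Φ *ᵥ v ⬝ᵥ Φ *ᵥ w := by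
  rw [← mulVec_mulVec, dotProduct_mulVec, vecMul_transpose]

lemma dotProduct_self_sub_mulVec_eq_add {Φ : Matrix ι κ ℝ} {y : ι → ℝ} {xhat : κ → ℝ}
    (hortho : ∀ v, Φ *ᵥ v ⬝ᵥ (y - Φ *ᵥ xhat) = 0) (z : κ → ℝ) :
    (y - Φ *ᵥ z) ⬝ᵥ (y - Φ *ᵥ z)
      = (y - Φ *ᵥ xhat) ⬝ᵥ (y - Φ *ᵥ xhat) + (z - xhat) ⬝ᵥ (Φᵀ * Φ) *ᵥ (z - xhat) := by
  have hsplit : y - Φ *ᵥ z = (y - Φ *ᵥ xhat) - Φ *ᵥ (z - xhat) := by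
    rw [mulVec_sub]
    abel
  set r := y - Φ *ᵥ xhat
  rw [hsplit, dotProduct_transpose_mul_self_mulVec]
  simp only [sub_dotProduct, dotProduct_sub, hortho, dotProduct_comm r]
  ring

end

section

variable {κ : Type*} [Fintype κ] [DecidableEq κ] {A : Matrix κ κ ℝ}

lemma dotProduct_mulVec_sub_smul_inv_mulVec_single (hA : A.IsSymm) (hdet : IsUnit A.det)
    (i : κ) (w : κ → ℝ) (t : ℝ) :
    (w - t • A⁻¹ *ᵥ Pi.single i 1) ⬝ᵥ A *ᵥ (w - t • A⁻¹ *ᵥ Pi.single i 1)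
      = w ⬝ᵥ A *ᵥ w - 2 * t * w i + t ^ 2 * A⁻¹ i i := by
  set b := A⁻¹ *ᵥ Pi.single i 1
  have hAb : A *ᵥ b = Pi.single i 1 := by
    rw [mulVec_mulVec, mul_nonsing_inv A hdet, one_mulVec]
  have hbA : ∀ v, b ⬝ᵥ A *ᵥ v = v i := fun v => by
    rw [dotProduct_mulVec, ← mulVec_transpose, hA.eq, hAb, single_one_dotProduct]
  have hbi : b i = A⁻¹ i i := by simp [b]
  simp only [mulVec_sub, mulVec_smul, sub_dotProduct, dotProduct_sub, smul_dotProduct,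
    dotProduct_smul, smul_eq_mul, hbA, hAb, dotProduct_single_one, Pi.sub_apply, Pi.smul_apply, hbi]
  ring

theorem Matrix.PosDef.isLeast_dotProduct_mulVec_of_apply_eq (hA : A.PosDef) (i : κ) (c : ℝ) :
    IsLeast {q | ∃ w : κ → ℝ, w i = c ∧ q = w ⬝ᵥ A *ᵥ w} (c ^ 2 / A⁻¹ i i) := by
  have hsymm : A.IsSymm := (conjTranspose_eq_transpose_of_trivial A).symm.trans hA.isHermitian
  have hdet : IsUnit A.det := (isUnit_iff_isUnit_det A).mp hA.isUnit
  have key := dotProduct_mulVec_sub_smul_inv_mulVec_single hsymm hdet i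
  set b := A⁻¹ *ᵥ Pi.single i 1
  set γ := A⁻¹ i i
  have hγ : 0 < γ := hA.inv.diag_pos
  constructor
  · refine ⟨(c / γ) • b, by simp [b, γ, hγ.ne'], ?_⟩
    have hval := key 0 (-(c / γ))
    rw [zero_sub, neg_smul, neg_neg] at hval
    rw [hval, mulVec_zero, dotProduct_zero, Pi.zero_apply]
    field_simp
    ring
  · rintro _ ⟨w, rfl, rfl⟩
    have hnonneg := hA.posSemidef.dotProduct_mulVec_nonneg (w - (w i / γ) • b)
    rw [star_trivial, key] at hnonneg
    have hdrop : 2 * (w i / γ) * w i - (w i / γ) ^ 2 * γ = w i ^ 2 / γ := by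
      field_simp
      ring
    linarith

end

/-- for a full-column-rank `Φ` and the least-squares minimizer `xhat`,
the increase in squared residual caused by forcing coordinate `i` to zero equals
`xhat i ^ 2 / γ i`, where `γ i = ((ΦᵀΦ)⁻¹)_{ii}`. -/
theorem backward_deletion_residual_increase {n m : ℕ}
    (Φ : Matrix (Fin n) (Fin m) ℝ)
    (hΦ : Function.Injective Φ.mulVec)
    (y : Fin n → ℝ) (xhat : Fin m → ℝ)
    (hxhat : ∀ z : Fin m → ℝ, euclidNorm (y - Φ.mulVec xhat) ≤ euclidNorm (y - Φ.mulVec z))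
    (i : Fin m) :
    sInf {c : ℝ | ∃ z : Fin m → ℝ, z i = 0 ∧ c = (euclidNorm (y - Φ.mulVec z)) ^ 2}
      - (euclidNorm (y - Φ.mulVec xhat)) ^ 2
      = (xhat i) ^ 2 / ((Φᵀ * Φ)⁻¹ i i) := by
  have hA : (Φᵀ * Φ).PosDef := by
    simpa [conjTranspose_eq_transpose_of_trivial] using PosDef.conjTranspose_mul_self Φ hΦ
  have hpyth := dotProduct_self_sub_mulVec_eq_add
    (mulVec_dotProduct_sub_mulVec_eq_zero_of_forall_euclidNorm_le hxhat)
  obtain ⟨⟨w, hwi, hw⟩, hlow⟩ := hA.isLeast_dotProduct_mulVec_of_apply_eq i (-xhat i)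
  have hleast : IsLeast {c : ℝ | ∃ z : Fin m → ℝ, z i = 0 ∧ c = (euclidNorm (y - Φ.mulVec z)) ^ 2}
      (euclidNorm (y - Φ.mulVec xhat) ^ 2 + (xhat i) ^ 2 / ((Φᵀ * Φ)⁻¹ i i)) := by
    rw [euclidNorm_sq, ← neg_sq]
    refine ⟨⟨xhat + w, by simp [hwi], ?_⟩, ?_⟩
    · rw [euclidNorm_sq, hpyth (xhat + w), add_sub_cancel_left, hw]
    · rintro _ ⟨z, hz, rfl⟩
      rw [euclidNorm_sq, hpyth z]
      exact add_le_add_right (hlow ⟨z - xhat, by simp [hz], rfl⟩) _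
  rw [hleast.csInf_eq]
  ring
end

section
/- Let Φ be a real n×m matrix with full column rank and let σ > 0 satisfy σ‖v‖₂ ≤ ‖Φv‖₂ for all v ∈ ℝ^m. Suppose y = Φx + ε where x ∈ ℝ^m has support S = supp(x), and assume (σ/2)·min_{i∈S}|x_i| > ‖ε‖₂. Let x̂ be the unique minimizer of z ↦ ‖y − Φz‖₂. Then |x̂_i| > (1/2)·min_{l∈S}|x_l| for every i ∈ S, and |x̂_j| < (1/2)·min_{l∈S}|x_l| for every j ∉ S. -/
/-! The least-squares residual `y - Φ x̂` is orthogonal to the range of `Φ`, so by Pythagoras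
`‖Φ (x̂ - x)‖ ≤ ‖y - Φ x‖ = ‖ε‖`. The lower singular-value bound turns this into
`‖x̂ - x‖₂ < min_{l ∈ S} |x l| / 2`, and every coordinate of `x̂ - x` obeys the same bound, which
separates the coordinates of `x̂` on and off the support. -/

open Matrix

section LeastSquares

variable {E F : Type*} [AddCommGroup E] [Module ℝ E] [NormedAddCommGroup F]
  [InnerProductSpace ℝ F]

def IsLeastSquares (A : E →ₗ[ℝ] F) (y : F) (xhat : E) : Prop :=
  ∀ z, ‖y - A xhat‖ ≤ ‖y - A z‖

theorem IsLeastSquares.inner_residual_map_eq_zero {A : E →ₗ[ℝ] F} {y : F} {xhat : E}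
    (h : IsLeastSquares A y xhat) (v : E) : inner ℝ (y - A xhat) (A v) = 0 := by
  have hmin : ‖y - A xhat‖ = ⨅ w : (LinearMap.range A : Set F), ‖y - w‖ := by
    refine le_antisymm (le_ciInf ?_) ?_
    · rintro ⟨_, z, rfl⟩
      exact h z
    · have hbdd : BddBelow (Set.range fun w : (LinearMap.range A : Set F) => ‖y - w‖) :=
        ⟨0, by rintro _ ⟨w, rfl⟩; exact norm_nonneg _⟩
      exact ciInf_le hbdd ⟨A xhat, LinearMap.mem_range_self A xhat⟩
  exact (Submodule.norm_eq_iInf_iff_real_inner_eq_zero _ (LinearMap.mem_range_self A xhat)).mp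
    hmin _ (LinearMap.mem_range_self A v)

theorem IsLeastSquares.norm_map_sub_le {A : E →ₗ[ℝ] F} {y : F} {xhat : E}
    (h : IsLeastSquares A y xhat) (x : E) : ‖A (xhat - x)‖ ≤ ‖y - A x‖ := by
  have hsplit : y - A x = (y - A xhat) + A (xhat - x) := by
    rw [map_sub]; abel
  have hpyth := norm_add_sq_eq_norm_sq_add_norm_sq_real (h.inner_residual_map_eq_zero (xhat - x))
  rw [hsplit, mul_self_le_mul_self_iff (norm_nonneg _) (norm_nonneg _), hpyth]
  exact le_add_of_nonneg_left (mul_self_nonneg _)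

end LeastSquares

theorem coordinate_separation_general {n m : ℕ}
    (Φ : Matrix (Fin n) (Fin m) ℝ)
    (σ : ℝ) (hσ : 0 < σ)
    (hlow : ∀ v : Fin m → ℝ, σ * euclidNorm v ≤ euclidNorm (Φ.mulVec v))
    (x : Fin m → ℝ) (ε : Fin n → ℝ) (y : Fin n → ℝ)
    (hy : y = Φ.mulVec x + ε)
    (S : Finset (Fin m)) (hS : ∀ i, i ∈ S ↔ x i ≠ 0) (hne : S.Nonempty)
    (hnoise : σ / 2 * S.inf' hne (fun l => |x l|) > euclidNorm ε)
    (xhat : Fin m → ℝ)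
    (hxhat : ∀ z : Fin m → ℝ, euclidNorm (y - Φ.mulVec xhat) ≤ euclidNorm (y - Φ.mulVec z)) :
    (∀ i ∈ S, |xhat i| > 1 / 2 * S.inf' hne (fun l => |x l|)) ∧
    (∀ j ∉ S, |xhat j| < 1 / 2 * S.inf' hne (fun l => |x l|)) := by
  set M := S.inf' hne (fun l => |x l|)
  have hls : IsLeastSquares (toLpLin 2 2 Φ) (WithLp.toLp 2 y) (WithLp.toLp 2 xhat) := by
    intro z
    simpa [euclidNorm, toLpLin_apply] using hxhat z.ofLp
  have herr : σ * euclidNorm (xhat - x) < σ * (M / 2) := by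
    calc σ * euclidNorm (xhat - x) ≤ euclidNorm (Φ *ᵥ (xhat - x)) := hlow _
      _ ≤ euclidNorm ε := by
        simpa [euclidNorm, hy, mulVec_sub] using hls.norm_map_sub_le (WithLp.toLp 2 x)
      _ < σ * (M / 2) := by linarith
  have hcoord (i : Fin m) : |xhat i - x i| < M / 2 :=
    (PiLp.norm_apply_le (WithLp.toLp 2 (xhat - x)) i).trans_lt (lt_of_mul_lt_mul_left herr hσ.le)
  refine ⟨fun i hi => ?_, fun j hj => ?_⟩
  · have hxi : M ≤ |x i| := S.inf'_le _ hi
    have hrev := abs_sub_abs_le_abs_sub (x i) (xhat i)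
    rw [abs_sub_comm] at hrev
    linarith [hcoord i]
  · have hxj : x j = 0 := not_ne_iff.mp (mt (hS j).mpr hj)
    linarith [hcoord j, show |xhat j - x j| = |xhat j| by rw [hxj, sub_zero]]

/-- coordinate separation for the full least-squares solution.
If `σ > 0` is a lower singular-value bound for the full-column-rank matrix `Φ`,
`y = Φx + ε` with `(σ/2)·min_{i∈S}|x i| > ‖ε‖₂` where `S = supp x`, then the
least-squares minimizer `xhat` satisfies `|xhat i| > (1/2)·min_{l∈S}|x l|` on `S`
and `|xhat j| < (1/2)·min_{l∈S}|x l|` off `S`. -/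
theorem coordinate_separation {n m : ℕ}
    (Φ : Matrix (Fin n) (Fin m) ℝ)
    (hΦ : Function.Injective Φ.mulVec)
    (σ : ℝ) (hσ : 0 < σ)
    (hlow : ∀ v : Fin m → ℝ, σ * euclidNorm v ≤ euclidNorm (Φ.mulVec v))
    (x : Fin m → ℝ) (ε : Fin n → ℝ) (y : Fin n → ℝ)
    (hy : y = Φ.mulVec x + ε)
    (S : Finset (Fin m)) (hS : ∀ i, i ∈ S ↔ x i ≠ 0) (hne : S.Nonempty)
    (hnoise : σ / 2 * S.inf' hne (fun l => |x l|) > euclidNorm ε)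
    (xhat : Fin m → ℝ)
    (hxhat : ∀ z : Fin m → ℝ, euclidNorm (y - Φ.mulVec xhat) ≤ euclidNorm (y - Φ.mulVec z)) :
    (∀ i ∈ S, |xhat i| > 1 / 2 * S.inf' hne (fun l => |x l|)) ∧
    (∀ j ∉ S, |xhat j| < 1 / 2 * S.inf' hne (fun l => |x l|)) :=
  coordinate_separation_general Φ σ hσ hlow x ε y hy S hS hne hnoise xhat hxhat
end

section
/- (Theorem 2, LACE/magnitude-pruning single-step guarantee.) Let Φ be a real n×m matrix with full column rank and let σ > 0 satisfy σ‖v‖₂ ≤ ‖Φv‖₂ for all v ∈ ℝ^m. Suppose y = Φx + ε where x has support S = supp(x), and assume (σ/2)·min_{i∈S}|x_i| > ‖ε‖₂. Then for every index set A with S ⊆ A ⊆ {1,…,m}, if x̂^A denotes the unique minimizer of ‖y − Φz‖₂ over z with supp(z) ⊆ A, then |x̂^A_j| < |x̂^A_i| for every i ∈ S and every j ∈ A \ S. Consequently the coordinate of smallest absolute value deleted by magnitude pruning always lies outside S while A strictly contains S, so LACE recovers S in m − |S| steps. -/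
/-! The residual `y - Φ x̂` of the least-squares fit is orthogonal to `Φ (x̂ - x)`, since both
`x̂` and `x` are supported in `A`. Writing `ε = (y - Φ x̂) + Φ (x̂ - x)`, Pythagoras gives
`σ ‖x̂ - x‖ ≤ ‖Φ (x̂ - x)‖ ≤ ‖ε‖ < σ μ / 2` with `μ = min_S |x_i|`. So every coordinate of `x̂`
lies within `μ / 2` of that of `x`: below `μ / 2` off `S`, above it on `S`. -/

open Matrix

theorem norm_sub_le_norm_sub_of_forall_norm_sub_le {F : Type*} [NormedAddCommGroup F]
    [InnerProductSpace ℝ F] (K : Submodule ℝ F) {y p q : F} (hp : p ∈ K) (hq : q ∈ K)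
    (hmin : ∀ w ∈ K, ‖y - p‖ ≤ ‖y - w‖) : ‖p - q‖ ≤ ‖y - q‖ := by
  have hinf : ‖y - p‖ = ⨅ w : (K : Set F), ‖y - w‖ :=
    le_antisymm (le_ciInf fun w => hmin w w.2)
      (ciInf_le (f := fun w : (K : Set F) => ‖y - w‖)
        ⟨0, by rintro _ ⟨w, rfl⟩; exact norm_nonneg _⟩ ⟨p, hp⟩)
  have horth := (K.norm_eq_iInf_iff_real_inner_eq_zero hp).1 hinf (p - q) (K.sub_mem hp hq)
  have hpyth := norm_add_sq_eq_norm_sq_add_norm_sq_real horth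
  rw [sub_add_sub_cancel] at hpyth
  exact (mul_self_le_mul_self_iff (norm_nonneg _) (norm_nonneg _)).2
    (by nlinarith [mul_self_nonneg ‖y - p‖])

section

variable {ι κ : Type*} [Fintype ι] [Fintype κ]

theorem abs_apply_le_euclidNorm (v : ι → ℝ) (l : ι) : |v l| ≤ euclidNorm v :=
  PiLp.norm_apply_le (WithLp.toLp 2 v) l

theorem euclidNorm_mulVec_sub_le_of_leastSquares {Φ : Matrix ι κ ℝ} {A : Finset κ}
    {y : ι → ℝ} {x xhat : κ → ℝ} (hx : ∀ l, x l ≠ 0 → l ∈ A) (hxhat : ∀ l, xhat l ≠ 0 → l ∈ A)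
    (hmin : ∀ z : κ → ℝ, (∀ l, z l ≠ 0 → l ∈ A) →
      euclidNorm (y - Φ *ᵥ xhat) ≤ euclidNorm (y - Φ *ᵥ z)) :
    euclidNorm (Φ *ᵥ (xhat - x)) ≤ euclidNorm (y - Φ *ᵥ x) := by
  let L := (WithLp.linearEquiv 2 ℝ (ι → ℝ)).symm.toLinearMap ∘ₗ Φ.mulVecLin
  let V : Submodule ℝ (κ → ℝ) := Submodule.pi (↑A)ᶜ fun _ => ⊥
  have hV : ∀ z, z ∈ V ↔ ∀ l, z l ≠ 0 → l ∈ A := by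
    simp [V, Submodule.mem_pi, not_imp_comm]
  have := norm_sub_le_norm_sub_of_forall_norm_sub_le (V.map L) (y := WithLp.toLp 2 y)
    (Submodule.mem_map_of_mem ((hV _).2 hxhat)) (Submodule.mem_map_of_mem ((hV _).2 hx))
    (by rintro _ ⟨z, hz, rfl⟩; exact hmin z ((hV z).1 hz))
  simpa [euclidNorm, L, Matrix.mulVec_sub] using this

end

theorem lace_single_step_guarantee_general {n m : ℕ}
    (Φ : Matrix (Fin n) (Fin m) ℝ)
    (σ : ℝ) (hσ : 0 < σ)
    (hlow : ∀ v : Fin m → ℝ, σ * euclidNorm v ≤ euclidNorm (Φ.mulVec v))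
    (x : Fin m → ℝ) (ε : Fin n → ℝ) (y : Fin n → ℝ)
    (hy : y = Φ.mulVec x + ε)
    (S : Finset (Fin m)) (hS : ∀ i, i ∈ S ↔ x i ≠ 0) (hne : S.Nonempty)
    (hnoise : σ / 2 * S.inf' hne (fun l => |x l|) > euclidNorm ε) :
    ∀ A : Finset (Fin m), S ⊆ A →
      ∀ xhatA : Fin m → ℝ,
        (∀ l, xhatA l ≠ 0 → l ∈ A) →
        (∀ z : Fin m → ℝ, (∀ l, z l ≠ 0 → l ∈ A) →
          euclidNorm (y - Φ.mulVec xhatA) ≤ euclidNorm (y - Φ.mulVec z)) →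
        ∀ i ∈ S, ∀ j ∈ A \ S, |xhatA j| < |xhatA i| := by
  intro A hSA xhatA hsupp hmin i hi j hj
  set μ := S.inf' hne fun l => |x l|
  have hxA : ∀ l, x l ≠ 0 → l ∈ A := fun l hl => hSA ((hS l).2 hl)
  have herr : euclidNorm (xhatA - x) < μ / 2 := by
    have hfit := euclidNorm_mulVec_sub_le_of_leastSquares hxA hsupp hmin
    rw [hy, add_sub_cancel_left] at hfit
    refine lt_of_mul_lt_mul_left ?_ hσ.le
    linarith [hlow (xhatA - x)]
  have hxj : x j = 0 := not_not.1 fun h => (Finset.mem_sdiff.1 hj).2 ((hS j).2 h)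
  have hμi : μ ≤ |x i| := S.inf'_le _ hi
  have hdevj := abs_apply_le_euclidNorm (xhatA - x) j
  have hdevi := abs_apply_le_euclidNorm (xhatA - x) i
  rw [Pi.sub_apply, hxj, sub_zero] at hdevj
  rw [Pi.sub_apply, abs_sub_comm] at hdevi
  linarith [abs_sub_abs_le_abs_sub (x i) (xhatA i)]

/-- Theorem 2, LACE/magnitude-pruning single-step guarantee.
If `σ > 0` is a lower singular-value bound for the full-column-rank matrix `Φ`,
`y = Φx + ε` with `(σ/2)·min_{i∈S}|x i| > ‖ε‖₂` where `S = supp x`, then for every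
active set `A ⊇ S`, the minimizer `xhatA` of `‖y − Φz‖₂` over `z` supported in `A`
satisfies `|xhatA j| < |xhatA i|` for all `i ∈ S` and `j ∈ A \ S`; hence magnitude
pruning never deletes an atom of `S` while `S ⊊ A`. -/
theorem lace_single_step_guarantee {n m : ℕ}
    (Φ : Matrix (Fin n) (Fin m) ℝ)
    (hΦ : Function.Injective Φ.mulVec)
    (σ : ℝ) (hσ : 0 < σ)
    (hlow : ∀ v : Fin m → ℝ, σ * euclidNorm v ≤ euclidNorm (Φ.mulVec v))
    (x : Fin m → ℝ) (ε : Fin n → ℝ) (y : Fin n → ℝ)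
    (hy : y = Φ.mulVec x + ε)
    (S : Finset (Fin m)) (hS : ∀ i, i ∈ S ↔ x i ≠ 0) (hne : S.Nonempty)
    (hnoise : σ / 2 * S.inf' hne (fun l => |x l|) > euclidNorm ε) :
    ∀ A : Finset (Fin m), S ⊆ A →
      ∀ xhatA : Fin m → ℝ,
        (∀ l, xhatA l ≠ 0 → l ∈ A) →
        (∀ z : Fin m → ℝ, (∀ l, z l ≠ 0 → l ∈ A) →
          euclidNorm (y - Φ.mulVec xhatA) ≤ euclidNorm (y - Φ.mulVec z)) →
        ∀ i ∈ S, ∀ j ∈ A \ S, |xhatA j| < |xhatA i| :=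
  lace_single_step_guarantee_general Φ σ hσ hlow x ε y hy S hS hne hnoise
end

section
/- Let Φ be a real n×m matrix whose columns φ_1,…,φ_m all have unit Euclidean norm, and let 1 ≤ k < m. Define the Babel function μ₁(k) = max over index sets Λ ⊆ {1,…,m} with |Λ| = k and indices i ∉ Λ of Σ_{j∈Λ} |⟨φ_i, φ_j⟩|. Then for every index set A ⊆ {1,…,m} with |A| = k and every eigenvalue λ of the Gram matrix (Φ_A)ᵀΦ_A (the k×k matrix of inner products of the columns indexed by A), one has |1 − λ| ≤ μ₁(k). Equivalently, every singular value σ of Φ_A satisfies |1 − σ²| ≤ μ₁(k). -/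
open Matrix

/-- The Babel function `μ₁(k)`: the maximum, over index sets `Λ` of cardinality `k`
and indices `i ∉ Λ`, of `∑_{j∈Λ} |⟨φ_i, φ_j⟩|`, where `⟨φ_i, φ_j⟩ = (ΦᵀΦ) i j`. -/
noncomputable def babel {n m : ℕ} (Φ : Matrix (Fin n) (Fin m) ℝ) (k : ℕ) : ℝ :=
  sSup {c : ℝ | ∃ Λ : Finset (Fin m), Λ.card = k ∧
    ∃ i, i ∉ Λ ∧ c = ∑ j ∈ Λ, |(Φᵀ * Φ) i j|}

/-! By Gershgorin's disc theorem an eigenvalue `λ` of the Gram matrix of the columns in `A` lies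
within `∑_{j ∈ A \ {i}} |⟨φ_i, φ_j⟩|` of the diagonal entry `‖φ_i‖² = 1` for some `i ∈ A`. Since
`k < m`, the `k - 1` indices of `A \ {i}` can be padded to `k` indices avoiding `i`, which bounds
that sum by `μ₁(k)`. -/

open Finset

theorem transpose_mul_self_apply_self {ι κ : Type*} [Fintype ι] (Φ : Matrix ι κ ℝ) (j : κ) :
    (Φᵀ * Φ) j j = euclidNorm (fun i => Φ i j) ^ 2 := by
  rw [euclidNorm, EuclideanSpace.norm_sq_eq]
  simp [Matrix.mul_apply, sq]

theorem Matrix.exists_abs_sub_diag_le_of_mulVec_eq_smul {ι : Type*} [Fintype ι] [DecidableEq ι]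
    {M : Matrix ι ι ℝ} {lam : ℝ} {v : ι → ℝ} (hv : v ≠ 0) (hev : M *ᵥ v = lam • v) :
    ∃ i, |lam - M i i| ≤ ∑ j ∈ univ.erase i, |M i j| :=
  have heig : Module.End.HasEigenvalue (Matrix.toLin' M) lam :=
    Module.End.hasEigenvalue_of_hasEigenvector
      (Module.End.hasEigenvector_iff.mpr ⟨by rwa [Module.End.mem_eigenspace_iff, toLin'_apply], hv⟩)
  (eigenvalue_mem_ball heig).imp fun _ hi => by simpa [Real.dist_eq] using hi

theorem Finset.sum_erase_univ_coe {α M : Type*} [DecidableEq α] [AddCommGroup M] (s : Finset α)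
    (i : s) (f : α → M) : ∑ j ∈ (univ : Finset s).erase i, f j = ∑ j ∈ s.erase i, f j := by
  rw [sum_erase_eq_sub (mem_univ i), sum_erase_eq_sub i.2, sum_coe_sort s f]

theorem babel_bddAbove {n m : ℕ} (Φ : Matrix (Fin n) (Fin m) ℝ) (k : ℕ) :
    BddAbove {c : ℝ | ∃ Λ : Finset (Fin m), Λ.card = k ∧
      ∃ i, i ∉ Λ ∧ c = ∑ j ∈ Λ, |(Φᵀ * Φ) i j|} := by
  refine (Set.finite_range fun p : Finset (Fin m) × Fin m =>
    ∑ j ∈ p.1, |(Φᵀ * Φ) p.2 j|).subset ?_ |>.bddAbove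
  rintro c ⟨Λ, -, i, -, rfl⟩
  exact ⟨(Λ, i), rfl⟩

theorem sum_abs_gram_le_babel {n m : ℕ} (Φ : Matrix (Fin n) (Fin m) ℝ) {k : ℕ} (hkm : k < m)
    {S : Finset (Fin m)} {i : Fin m} (hi : i ∉ S) (hS : S.card ≤ k) :
    ∑ j ∈ S, |(Φᵀ * Φ) i j| ≤ babel Φ k := by
  have hk : k ≤ (univ.erase i).card := by
    rw [card_erase_of_mem (mem_univ i), card_univ, Fintype.card_fin]; omega
  obtain ⟨Λ, hSΛ, hΛ, hΛk⟩ :=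
    exists_subsuperset_card_eq (subset_erase.mpr ⟨subset_univ S, hi⟩) hS hk
  calc ∑ j ∈ S, |(Φᵀ * Φ) i j| ≤ ∑ j ∈ Λ, |(Φᵀ * Φ) i j| :=
        sum_le_sum_of_subset_of_nonneg hSΛ fun _ _ _ => abs_nonneg _
    _ ≤ babel Φ k :=
        le_csSup (babel_bddAbove Φ k) ⟨Λ, hΛk, i, fun h => (mem_erase.mp (hΛ h)).1 rfl, rfl⟩

theorem gram_eigenvalue_babel_bound_general {n m : ℕ}
    (Φ : Matrix (Fin n) (Fin m) ℝ)
    (hunit : ∀ j : Fin m, euclidNorm (fun i => Φ i j) = 1)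
    (k : ℕ) (hkm : k < m) :
    ∀ A : Finset (Fin m), A.card = k →
      ∀ (lam : ℝ) (v : ↥A → ℝ), v ≠ 0 →
        (Matrix.of fun i j : ↥A => (Φᵀ * Φ) i.1 j.1).mulVec v = lam • v →
        |1 - lam| ≤ babel Φ k := by
  intro A hA lam v hv hev
  obtain ⟨i, hi⟩ := Matrix.exists_abs_sub_diag_le_of_mulVec_eq_smul hv hev
  have hdiag : (Φᵀ * Φ) i i = 1 := by rw [transpose_mul_self_apply_self, hunit, one_pow]
  calc |1 - lam| = |lam - (Φᵀ * Φ) i i| := by rw [hdiag, abs_sub_comm]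
    _ ≤ ∑ j ∈ A.erase i, |(Φᵀ * Φ) i j| := by
        simpa only [of_apply, sum_erase_univ_coe A i fun j => |(Φᵀ * Φ) i j|] using hi
    _ ≤ babel Φ k :=
        sum_abs_gram_le_babel Φ hkm (notMem_erase i.1 A) (by rw [card_erase_of_mem i.2]; omega)

/-- for a dictionary `Φ` with unit-norm columns and `1 ≤ k < m`,
every eigenvalue `lam` of the Gram matrix of any `k` columns satisfies
`|1 − lam| ≤ μ₁(k)`. -/
theorem gram_eigenvalue_babel_bound {n m : ℕ}
    (Φ : Matrix (Fin n) (Fin m) ℝ)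
    (hunit : ∀ j : Fin m, euclidNorm (fun i => Φ i j) = 1)
    (k : ℕ) (hk1 : 1 ≤ k) (hkm : k < m) :
    ∀ A : Finset (Fin m), A.card = k →
      ∀ (lam : ℝ) (v : ↥A → ℝ), v ≠ 0 →
        (Matrix.of fun i j : ↥A => (Φᵀ * Φ) i.1 j.1).mulVec v = lam • v →
        |1 - lam| ≤ babel Φ k :=
  gram_eigenvalue_babel_bound_general Φ hunit k hkm
end
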